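/- arXiv:0706.1508 — 5 statements merged into one kernel-verified Lean document; each statement's English description precedes it below -/
import Mathlib

section
/- In the double interferometer (same setup as before), the sequential weak values of pairs of path projectors are (E,B)_w = 1/2, (F,B)_w = −1/2, (E,C)_w = 1/2, (F,C)_w = 1/2, where (Y,X)_w = ⟨D|U_3 P_Y U_2 P_X U_1|A⟩ / ⟨D|U_3 U_2 U_1|A⟩. -/
open scoped InnerProductSpace

/-- The rank-one projector `|v⟩⟨v|` onto a (unit) vector `v`. -/
noncomputable def proj {H : Type*} [NormedAddCommGroup H] [InnerProductSpace ℂ H]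
    (v : H) : H →ₗ[ℂ] H :=
  ((innerSL ℂ v).smulRight v).toLinearMap

/-!
Inserting the projectors `P_X` and `P_Y` leaves a single path `A → X → Y → D`, whose amplitude
is the product `⟨X|U₁|A⟩⟨Y|U₂|X⟩⟨D|U₃|Y⟩` of three beam-splitter amplitudes. Each of these is
`±s` with `s = 1/√2`, so every numerator is `±s³`, while the unprojected amplitude is `-2s³`
(the two paths through `F` cancel). The weak values are therefore `±1/2`: the factor `s³` cancels.
-/

section

variable {H : Type*} [NormedAddCommGroup H] [InnerProductSpace ℂ H]

lemma proj_apply (v w : H) : proj v w = ⟪v, w⟫_ℂ • v := rfl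

lemma inner_map_proj_map_proj (d x y ψ : H) (U V : H →ₗ[ℂ] H) :
    ⟪d, V (proj y (U (proj x ψ)))⟫_ℂ = ⟪x, ψ⟫_ℂ * ⟪y, U x⟫_ℂ * ⟪d, V y⟫_ℂ := by
  simp only [proj_apply, map_smul, inner_smul_right]
  ring

end

theorem double_interferometer_sequential_weak_values_general
    {H : Type*} [NormedAddCommGroup H] [InnerProductSpace ℂ H]
    (vA vB vC vE vF vD vD' : H)
    (horth : Orthonormal ℂ ![vA, vB, vC, vE, vF, vD, vD'])
    (U1 U2 U3 : H →ₗ[ℂ] H)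
    (h1 : U1 vA = (Real.sqrt 2 : ℂ)⁻¹ • (vB + vC))
    (h2 : U2 vB = (Real.sqrt 2 : ℂ)⁻¹ • (vE + vF))
    (h3 : U2 vC = (Real.sqrt 2 : ℂ)⁻¹ • (vE - vF))
    (h4 : U3 vE = (Real.sqrt 2 : ℂ)⁻¹ • (-vD + vD'))
    (h5 : U3 vF = (Real.sqrt 2 : ℂ)⁻¹ • (vD + vD'))
    :
    ⟪vD, U3 (proj vE (U2 (proj vB (U1 vA))))⟫_ℂ / ⟪vD, U3 (U2 (U1 vA))⟫_ℂ = 1 / 2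
    ∧ ⟪vD, U3 (proj vF (U2 (proj vB (U1 vA))))⟫_ℂ / ⟪vD, U3 (U2 (U1 vA))⟫_ℂ = -(1 / 2)
    ∧ ⟪vD, U3 (proj vE (U2 (proj vC (U1 vA))))⟫_ℂ / ⟪vD, U3 (U2 (U1 vA))⟫_ℂ = 1 / 2
    ∧ ⟪vD, U3 (proj vF (U2 (proj vC (U1 vA))))⟫_ℂ / ⟪vD, U3 (U2 (U1 vA))⟫_ℂ = 1 / 2 := by
  have hBB : ⟪vB, vB⟫_ℂ = 1 := inner_self_eq_one_of_norm_eq_one (horth.norm_eq_one 1)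
  have hCC : ⟪vC, vC⟫_ℂ = 1 := inner_self_eq_one_of_norm_eq_one (horth.norm_eq_one 2)
  have hEE : ⟪vE, vE⟫_ℂ = 1 := inner_self_eq_one_of_norm_eq_one (horth.norm_eq_one 3)
  have hFF : ⟪vF, vF⟫_ℂ = 1 := inner_self_eq_one_of_norm_eq_one (horth.norm_eq_one 4)
  have hDD : ⟪vD, vD⟫_ℂ = 1 := inner_self_eq_one_of_norm_eq_one (horth.norm_eq_one 5)
  have hBC : ⟪vB, vC⟫_ℂ = 0 := horth.inner_eq_zero (i := 1) (j := 2) (by decide)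
  have hCB : ⟪vC, vB⟫_ℂ = 0 := horth.inner_eq_zero (i := 2) (j := 1) (by decide)
  have hEF : ⟪vE, vF⟫_ℂ = 0 := horth.inner_eq_zero (i := 3) (j := 4) (by decide)
  have hFE : ⟪vF, vE⟫_ℂ = 0 := horth.inner_eq_zero (i := 4) (j := 3) (by decide)
  have hDD' : ⟪vD, vD'⟫_ℂ = 0 := horth.inner_eq_zero (i := 5) (j := 6) (by decide)
  set s : ℂ := (Real.sqrt 2 : ℂ)⁻¹
  have hs : s ≠ 0 := by simp [s]
  clear_value s
  have hden : ⟪vD, U3 (U2 (U1 vA))⟫_ℂ = -(2 * s ^ 3) := by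
    simp only [h1, h2, h3, h4, h5, map_smul, map_add, map_sub, inner_smul_right,
      inner_add_right, inner_sub_right, inner_neg_right, hDD, hDD']
    ring
  rw [hden]
  simp only [inner_map_proj_map_proj, h1, h2, h3, h4, h5, inner_smul_right,
    inner_add_right, inner_sub_right, inner_neg_right,
    hBB, hCC, hEE, hFF, hDD, hBC, hCB, hEF, hFE, hDD']
  refine ⟨?_, ?_, ?_, ?_⟩ <;> field_simp <;> norm_num

/-- in the double interferometer, the sequential weak values of pairs of
path projectors are (E,B)_w = 1/2, (F,B)_w = -1/2, (E,C)_w = 1/2, (F,C)_w = 1/2. -/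
theorem double_interferometer_sequential_weak_values
    {H : Type*} [NormedAddCommGroup H] [InnerProductSpace ℂ H] [FiniteDimensional ℂ H]
    (vA vB vC vE vF vD vD' : H)
    (horth : Orthonormal ℂ ![vA, vB, vC, vE, vF, vD, vD'])
    (U1 U2 U3 : H →ₗ[ℂ] H)
    (hU1 : U1 ∈ unitary (H →ₗ[ℂ] H)) (hU2 : U2 ∈ unitary (H →ₗ[ℂ] H))
    (hU3 : U3 ∈ unitary (H →ₗ[ℂ] H))
    (h1 : U1 vA = (Real.sqrt 2 : ℂ)⁻¹ • (vB + vC))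
    (h2 : U2 vB = (Real.sqrt 2 : ℂ)⁻¹ • (vE + vF))
    (h3 : U2 vC = (Real.sqrt 2 : ℂ)⁻¹ • (vE - vF))
    (h4 : U3 vE = (Real.sqrt 2 : ℂ)⁻¹ • (-vD + vD'))
    (h5 : U3 vF = (Real.sqrt 2 : ℂ)⁻¹ • (vD + vD'))
    (hD : ⟪vD, U3 (U2 (U1 vA))⟫_ℂ ≠ 0)
    :
    ⟪vD, U3 (proj vE (U2 (proj vB (U1 vA))))⟫_ℂ / ⟪vD, U3 (U2 (U1 vA))⟫_ℂ = 1 / 2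
    ∧ ⟪vD, U3 (proj vF (U2 (proj vB (U1 vA))))⟫_ℂ / ⟪vD, U3 (U2 (U1 vA))⟫_ℂ = -(1 / 2)
    ∧ ⟪vD, U3 (proj vE (U2 (proj vC (U1 vA))))⟫_ℂ / ⟪vD, U3 (U2 (U1 vA))⟫_ℂ = 1 / 2
    ∧ ⟪vD, U3 (proj vF (U2 (proj vC (U1 vA))))⟫_ℂ / ⟪vD, U3 (U2 (U1 vA))⟫_ℂ = 1 / 2 :=
  double_interferometer_sequential_weak_values_general vA vB vC vE vF vD vD' horth U1 U2 U3 h1 h2 h3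
    h4 h5
end

section
/- In the double interferometer, the sequential weak values sum correctly to single weak values: (E,B)_w + (F,B)_w = B_w, (E,C)_w + (F,C)_w = C_w, (E,B)_w + (E,C)_w = E_w, and (F,B)_w + (F,C)_w = F_w. In particular (F,B)_w = −1/2 while B_w = F_w = 0. -/
open scoped InnerProductSpace

/-- sequential weak values sum correctly to single weak values:
(E,B)_w + (F,B)_w = B_w, (E,C)_w + (F,C)_w = C_w, (E,B)_w + (E,C)_w = E_w,
(F,B)_w + (F,C)_w = F_w; in particular (F,B)_w = -1/2 while B_w = F_w = 0. -/
theorem double_interferometer_marginal_consistency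
    {H : Type*} [NormedAddCommGroup H] [InnerProductSpace ℂ H] [FiniteDimensional ℂ H]
    (vA vB vC vE vF vD vD' : H)
    (horth : Orthonormal ℂ ![vA, vB, vC, vE, vF, vD, vD'])
    (U1 U2 U3 : H →ₗ[ℂ] H)
    (hU1 : U1 ∈ unitary (H →ₗ[ℂ] H)) (hU2 : U2 ∈ unitary (H →ₗ[ℂ] H))
    (hU3 : U3 ∈ unitary (H →ₗ[ℂ] H))
    (h1 : U1 vA = (Real.sqrt 2 : ℂ)⁻¹ • (vB + vC))
    (h2 : U2 vB = (Real.sqrt 2 : ℂ)⁻¹ • (vE + vF))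
    (h3 : U2 vC = (Real.sqrt 2 : ℂ)⁻¹ • (vE - vF))
    (h4 : U3 vE = (Real.sqrt 2 : ℂ)⁻¹ • (-vD + vD'))
    (h5 : U3 vF = (Real.sqrt 2 : ℂ)⁻¹ • (vD + vD'))
    (hD : ⟪vD, U3 (U2 (U1 vA))⟫_ℂ ≠ 0)
    :
    ⟪vD, U3 (proj vE (U2 (proj vB (U1 vA))))⟫_ℂ / ⟪vD, U3 (U2 (U1 vA))⟫_ℂ
        + ⟪vD, U3 (proj vF (U2 (proj vB (U1 vA))))⟫_ℂ / ⟪vD, U3 (U2 (U1 vA))⟫_ℂ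
      = ⟪vD, U3 (U2 (proj vB (U1 vA)))⟫_ℂ / ⟪vD, U3 (U2 (U1 vA))⟫_ℂ
    ∧ ⟪vD, U3 (proj vE (U2 (proj vC (U1 vA))))⟫_ℂ / ⟪vD, U3 (U2 (U1 vA))⟫_ℂ
        + ⟪vD, U3 (proj vF (U2 (proj vC (U1 vA))))⟫_ℂ / ⟪vD, U3 (U2 (U1 vA))⟫_ℂ
      = ⟪vD, U3 (U2 (proj vC (U1 vA)))⟫_ℂ / ⟪vD, U3 (U2 (U1 vA))⟫_ℂ
    ∧ ⟪vD, U3 (proj vE (U2 (proj vB (U1 vA))))⟫_ℂ / ⟪vD, U3 (U2 (U1 vA))⟫_ℂ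
        + ⟪vD, U3 (proj vE (U2 (proj vC (U1 vA))))⟫_ℂ / ⟪vD, U3 (U2 (U1 vA))⟫_ℂ
      = ⟪vD, U3 (proj vE (U2 (U1 vA)))⟫_ℂ / ⟪vD, U3 (U2 (U1 vA))⟫_ℂ
    ∧ ⟪vD, U3 (proj vF (U2 (proj vB (U1 vA))))⟫_ℂ / ⟪vD, U3 (U2 (U1 vA))⟫_ℂ
        + ⟪vD, U3 (proj vF (U2 (proj vC (U1 vA))))⟫_ℂ / ⟪vD, U3 (U2 (U1 vA))⟫_ℂ
      = ⟪vD, U3 (proj vF (U2 (U1 vA)))⟫_ℂ / ⟪vD, U3 (U2 (U1 vA))⟫_ℂ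
    ∧ ⟪vD, U3 (proj vF (U2 (proj vB (U1 vA))))⟫_ℂ / ⟪vD, U3 (U2 (U1 vA))⟫_ℂ = -(1 / 2)
    ∧ ⟪vD, U3 (U2 (proj vB (U1 vA)))⟫_ℂ / ⟪vD, U3 (U2 (U1 vA))⟫_ℂ = 0
    ∧ ⟪vD, U3 (proj vF (U2 (U1 vA)))⟫_ℂ / ⟪vD, U3 (U2 (U1 vA))⟫_ℂ = 0 := by

  classical
  have ip := orthonormal_iff_ite.mp horth
  have hBB : ⟪vB, vB⟫_ℂ = 1 := by simpa using ip 1 1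
  have hBC : ⟪vB, vC⟫_ℂ = 0 := by simpa using ip 1 2
  have hCB : ⟪vC, vB⟫_ℂ = 0 := by simpa using ip 2 1
  have hCC : ⟪vC, vC⟫_ℂ = 1 := by simpa using ip 2 2
  have hEE : ⟪vE, vE⟫_ℂ = 1 := by simpa using ip 3 3
  have hEF : ⟪vE, vF⟫_ℂ = 0 := by simpa using ip 3 4
  have hFE : ⟪vF, vE⟫_ℂ = 0 := by simpa using ip 4 3
  have hFF : ⟪vF, vF⟫_ℂ = 1 := by simpa using ip 4 4
  have hDD : ⟪vD, vD⟫_ℂ = 1 := by simpa using ip 5 5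
  have hDD' : ⟪vD, vD'⟫_ℂ = 0 := by simpa using ip 5 6
  set s : ℂ := (Real.sqrt 2 : ℂ)⁻¹ with hsdef
  have hsq : ((Real.sqrt 2 : ℝ) : ℂ) * ((Real.sqrt 2 : ℝ) : ℂ) = 2 := by
    norm_cast
    exact Real.mul_self_sqrt (by norm_num)
  have hs2 : s * s = 2⁻¹ := by
    rw [hsdef, ← mul_inv, hsq]
  have hsne : s ≠ 0 := by
    rw [hsdef]
    simp [Real.sqrt_eq_zero']
  have proj_apply : ∀ v w : H, proj v w = ⟪v, w⟫_ℂ • v := fun v w => rfl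
  -- pieces
  have hpB : proj vB (U1 vA) = s • vB := by
    rw [proj_apply, h1, inner_smul_right, inner_add_right, hBB, hBC]
    ring_nf
  have hpC : proj vC (U1 vA) = s • vC := by
    rw [proj_apply, h1, inner_smul_right, inner_add_right, hCB, hCC]
    ring_nf
  have hU2B : U2 (proj vB (U1 vA)) = (s * s) • (vE + vF) := by
    rw [hpB, map_smul, h2, smul_smul]
  have hU2C : U2 (proj vC (U1 vA)) = (s * s) • (vE - vF) := by
    rw [hpC, map_smul, h3, smul_smul]
  have hUU : U2 (U1 vA) = vE := by
    rw [h1, map_smul, map_add, h2, h3, smul_add, smul_smul, smul_smul, ← smul_add]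
    rw [show (vE + vF) + (vE - vF) = (2 : ℂ) • vE by module, smul_smul, hs2]
    norm_num
  have hDE : ⟪vD, U3 vE⟫_ℂ = -s := by
    rw [h4, inner_smul_right, inner_add_right, inner_neg_right, hDD, hDD']
    ring_nf
  have hDF : ⟪vD, U3 vF⟫_ℂ = s := by
    rw [h5, inner_smul_right, inner_add_right, hDD, hDD']
    ring_nf
  have hden : ⟪vD, U3 (U2 (U1 vA))⟫_ℂ = -s := by rw [hUU, hDE]
  -- projections at E/F level
  have hpEB : proj vE (U2 (proj vB (U1 vA))) = (s * s) • vE := by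
    rw [hU2B, proj_apply, inner_smul_right, inner_add_right, hEE, hEF]
    ring_nf
  have hpFB : proj vF (U2 (proj vB (U1 vA))) = (s * s) • vF := by
    rw [hU2B, proj_apply, inner_smul_right, inner_add_right, hFE, hFF]
    ring_nf
  have hpEC : proj vE (U2 (proj vC (U1 vA))) = (s * s) • vE := by
    rw [hU2C, proj_apply, inner_smul_right, inner_sub_right, hEE, hEF]
    ring_nf
  have hpFC : proj vF (U2 (proj vC (U1 vA))) = (-(s * s)) • vF := by
    rw [hU2C, proj_apply, inner_smul_right, inner_sub_right, hFE, hFF]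
    ring_nf
  have hpE : proj vE (U2 (U1 vA)) = vE := by
    rw [hUU, proj_apply, hEE, one_smul]
  have hpF : proj vF (U2 (U1 vA)) = (0 : H) := by
    rw [hUU, proj_apply, hFE, zero_smul]
  -- numerators
  have nEB : ⟪vD, U3 (proj vE (U2 (proj vB (U1 vA))))⟫_ℂ = (s * s) * (-s) := by
    rw [hpEB, map_smul, inner_smul_right, hDE]
  have nFB : ⟪vD, U3 (proj vF (U2 (proj vB (U1 vA))))⟫_ℂ = (s * s) * s := by
    rw [hpFB, map_smul, inner_smul_right, hDF]
  have nEC : ⟪vD, U3 (proj vE (U2 (proj vC (U1 vA))))⟫_ℂ = (s * s) * (-s) := by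
    rw [hpEC, map_smul, inner_smul_right, hDE]
  have nFC : ⟪vD, U3 (proj vF (U2 (proj vC (U1 vA))))⟫_ℂ = (-(s * s)) * s := by
    rw [hpFC, map_smul, inner_smul_right, hDF]
  have nB : ⟪vD, U3 (U2 (proj vB (U1 vA)))⟫_ℂ = 0 := by
    rw [hU2B, map_smul, map_add, inner_smul_right, inner_add_right, hDE, hDF]
    ring
  have nC : ⟪vD, U3 (U2 (proj vC (U1 vA)))⟫_ℂ = (s * s) * (-2 * s) := by
    rw [hU2C, map_smul, map_sub, inner_smul_right, inner_sub_right, hDE, hDF]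
    ring
  have nE : ⟪vD, U3 (proj vE (U2 (U1 vA)))⟫_ℂ = -s := by rw [hpE, hDE]
  have nF : ⟪vD, U3 (proj vF (U2 (U1 vA)))⟫_ℂ = 0 := by
    rw [hpF, map_zero, inner_zero_right]
  rw [nEB, nFB, nEC, nFC, nB, nC, nE, nF, hden]
  have key : ∀ a : ℂ, (a * s) / (-s) = -a := by
    intro a
    rw [show a * s = (-a) * (-s) by ring, mul_div_assoc,
      div_self (neg_ne_zero.mpr hsne), mul_one]
  refine ⟨by ring, by field_simp; ring, by field_simp; linear_combination 2 * hs2,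
    by ring, ?_, by ring, by ring⟩
  rw [show s * s * s = (s * s) * s by ring, key, hs2]
  norm_num
end

section
/- Equivalence of counterfactuality definitions for n = 2 insertions: given projectors N_1, N_2 with complements F_i = I − N_i, unitaries U_1, U_2, U_3, and states ψ_i, ψ_f with ⟨ψ_f|U_3U_2U_1|ψ_i⟩ ≠ 0, the following are equivalent: (a) ⟨ψ_f|U_3 ξ_2 U_2 ξ_1 U_1|ψ_i⟩ = 0 for every choice (ξ_1,ξ_2) ∈ {N_1,F_1}×{N_2,F_2} other than (F_1,F_2); (b) (N_1)_w = 0, (N_2)_w = 0, and (N_2,N_1)_w = 0. -/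
open scoped InnerProductSpace

lemma proj_ne_compl {H : Type*} [NormedAddCommGroup H] [InnerProductSpace ℂ H]
    [Nontrivial H] (N : H →ₗ[ℂ] H) (hsq : N * N = N) : N ≠ 1 - N := by
  intro h
  have h2 : (2 : ℂ) • N = 1 := by
    have : N + N = 1 := by rw [h] at *; nth_rewrite 1 [h]; abel
    rw [two_smul]; exact this
  have hN : N = (2 : ℂ)⁻¹ • 1 := by
    rw [← h2]; simp [smul_smul]
  rw [hN] at hsq
  have : ((2 : ℂ)⁻¹ * 2⁻¹) • (1 : H →ₗ[ℂ] H) = (2 : ℂ)⁻¹ • 1 := by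
    simpa [smul_smul, Module.End.mul_eq_comp] using hsq
  obtain ⟨x, hx⟩ := exists_ne (0 : H)
  have hx2 := congrArg (fun f : H →ₗ[ℂ] H => f x) this
  simp only [LinearMap.smul_apply, Module.End.one_apply] at hx2
  have : (((2 : ℂ)⁻¹ * 2⁻¹) - 2⁻¹) • x = 0 := by rw [sub_smul, hx2, sub_self]
  rcases smul_eq_zero.mp this with h | h
  · norm_num at h
  · exact hx h

/-- equivalence of the histories and weak-values definitions of
counterfactuality for `n = 2` insertions.  With projectors `N₁, N₂`, complements
`Fᵢ = I - Nᵢ`, and nonzero total amplitude, the vanishing of every history amplitude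
other than the all-`F` history is equivalent to the vanishing of the weak values
`(N₁)_w`, `(N₂)_w` and the sequential weak value `(N₂, N₁)_w`. -/
theorem counterfactual_two_insertions_equiv
    {H : Type*} [NormedAddCommGroup H] [InnerProductSpace ℂ H] [FiniteDimensional ℂ H]
    (N1 N2 : H →ₗ[ℂ] H)
    (hN1 : IsSelfAdjoint N1) (hN1sq : N1 * N1 = N1)
    (hN2 : IsSelfAdjoint N2) (hN2sq : N2 * N2 = N2)
    (U1 U2 U3 : H →ₗ[ℂ] H)
    (hU1 : U1 ∈ unitary (H →ₗ[ℂ] H)) (hU2 : U2 ∈ unitary (H →ₗ[ℂ] H))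
    (hU3 : U3 ∈ unitary (H →ₗ[ℂ] H))
    (ψi ψf : H)
    (hD : ⟪ψf, U3 (U2 (U1 ψi))⟫_ℂ ≠ 0) :
    (∀ ξ1 ξ2 : H →ₗ[ℂ] H,
        (ξ1 = N1 ∨ ξ1 = 1 - N1) → (ξ2 = N2 ∨ ξ2 = 1 - N2) →
        ¬(ξ1 = 1 - N1 ∧ ξ2 = 1 - N2) →
        ⟪ψf, U3 (ξ2 (U2 (ξ1 (U1 ψi))))⟫_ℂ = 0)
      ↔ (⟪ψf, U3 (U2 (N1 (U1 ψi)))⟫_ℂ / ⟪ψf, U3 (U2 (U1 ψi))⟫_ℂ = 0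
          ∧ ⟪ψf, U3 (N2 (U2 (U1 ψi)))⟫_ℂ / ⟪ψf, U3 (U2 (U1 ψi))⟫_ℂ = 0
          ∧ ⟪ψf, U3 (N2 (U2 (N1 (U1 ψi))))⟫_ℂ / ⟪ψf, U3 (U2 (U1 ψi))⟫_ℂ = 0) := by
  have hψf : ψf ≠ 0 := by rintro rfl; simp at hD
  have : Nontrivial H := ⟨ψf, 0, hψf⟩
  have hne1 := proj_ne_compl N1 hN1sq
  have hne2 := proj_ne_compl N2 hN2sq
  simp only [div_eq_zero_iff, or_iff_left hD]
  constructor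
  · intro h
    have hc := h N1 N2 (Or.inl rfl) (Or.inl rfl) (by rintro ⟨h1, _⟩; exact hne1 h1)
    have ha := h N1 (1 - N2) (Or.inl rfl) (Or.inr rfl) (by rintro ⟨h1, _⟩; exact hne1 h1)
    have hb := h (1 - N1) N2 (Or.inr rfl) (Or.inl rfl) (by rintro ⟨_, h2⟩; exact hne2 h2)
    simp only [LinearMap.sub_apply, Module.End.one_apply, map_sub, inner_sub_right,
      sub_eq_zero] at ha hb
    exact ⟨ha.trans hc, hb.trans hc, hc⟩
  · rintro ⟨ha, hb, hc⟩ ξ1 ξ2 h1 h2 hne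
    rcases h1 with rfl | rfl <;> rcases h2 with rfl | rfl
    · exact hc
    · simp [LinearMap.sub_apply, Module.End.one_apply, map_sub, inner_sub_right, ha, hc]
    · simp [LinearMap.sub_apply, Module.End.one_apply, map_sub, inner_sub_right, hb, hc]
    · exact absurd ⟨rfl, rfl⟩ hne
end

section
/- General equivalence of the histories and weak-values definitions of counterfactuality: for projectors N_1,...,N_n with F_i = I − N_i, unitaries U_1,...,U_{n+1}, and D = ⟨ψ_f|U_{n+1}···U_1|ψ_i⟩ ≠ 0, the condition that ⟨ψ_f|U_{n+1} ξ_n U_n ··· ξ_1 U_1|ψ_i⟩ = 0 for every history ξ ∈ {N_i, F_i}^n other than the all-F history is equivalent to the condition that (N_{i_k},...,N_{i_1})_w = 0 for all nonempty subsets {i_1 < ··· < i_k} ⊆ {1,...,n}, where the sequential weak value inserts N at the listed positions and the identity elsewhere. -/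
open scoped InnerProductSpace

/-- The operator `U_{n+1} A_n U_n ⋯ A_1 U_1` appearing in the numerator of the
sequential weak value `(A_n, …, A_1)_w` (indices shifted to start at `0`). -/
noncomputable def seqOp {H : Type*} [NormedAddCommGroup H] [InnerProductSpace ℂ H]
    (n : ℕ) (A : Fin n → (H →ₗ[ℂ] H)) (U : Fin (n + 1) → (H →ₗ[ℂ] H)) : H →ₗ[ℂ] H :=
  U (Fin.last n) * (((List.finRange n).reverse).map (fun i => A i * U i.castSucc)).prod

section Aux

variable {H : Type*} [NormedAddCommGroup H] [InnerProductSpace ℂ H]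
variable {n : ℕ} (U : Fin (n + 1) → (H →ₗ[ℂ] H))

private lemma listProd_congr (l : List (Fin n)) (A B : Fin n → (H →ₗ[ℂ] H))
    (h : ∀ i ∈ l, A i = B i) :
    (l.map (fun i => A i * U i.castSucc)).prod
      = (l.map (fun i => B i * U i.castSucc)).prod := by
  congr 1
  exact List.map_congr_left (fun i hi => by rw [h i hi])

private lemma listProd_add (l : List (Fin n)) (hl : l.Nodup) (j : Fin n) (hj : j ∈ l)
    (A : Fin n → (H →ₗ[ℂ] H)) (X Y : H →ₗ[ℂ] H) (hA : A j = X + Y) :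
    (l.map (fun i => A i * U i.castSucc)).prod
      = (l.map (fun i => Function.update A j X i * U i.castSucc)).prod
        + (l.map (fun i => Function.update A j Y i * U i.castSucc)).prod := by
  induction l with
  | nil => simp at hj
  | cons a t ih =>
    have hnd := List.nodup_cons.mp hl
    simp only [List.map_cons, List.prod_cons]
    rcases List.mem_cons.mp hj with h | h
    · subst h
      have ht : j ∉ t := hnd.1
      have e1 : (t.map (fun i => Function.update A j X i * U i.castSucc)).prod
          = (t.map (fun i => A i * U i.castSucc)).prod :=
        listProd_congr U t _ _ (fun i hi =>
          Function.update_of_ne (by rintro rfl; exact ht hi) _ _)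
      have e2 : (t.map (fun i => Function.update A j Y i * U i.castSucc)).prod
          = (t.map (fun i => A i * U i.castSucc)).prod :=
        listProd_congr U t _ _ (fun i hi =>
          Function.update_of_ne (by rintro rfl; exact ht hi) _ _)
      rw [e1, e2, Function.update_self, Function.update_self, hA, add_mul, add_mul]
    · have haj : a ≠ j := by rintro rfl; exact hnd.1 h
      rw [ih hnd.2 h, Function.update_of_ne haj, Function.update_of_ne haj, mul_add]

private lemma listProd_neg (l : List (Fin n)) (hl : l.Nodup) (j : Fin n) (hj : j ∈ l)
    (A : Fin n → (H →ₗ[ℂ] H)) (X : H →ₗ[ℂ] H) (hA : A j = -X) :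
    (l.map (fun i => A i * U i.castSucc)).prod
      = -(l.map (fun i => Function.update A j X i * U i.castSucc)).prod := by
  induction l with
  | nil => simp at hj
  | cons a t ih =>
    have hnd := List.nodup_cons.mp hl
    simp only [List.map_cons, List.prod_cons]
    rcases List.mem_cons.mp hj with h | h
    · subst h
      have ht : j ∉ t := hnd.1
      have e1 : (t.map (fun i => Function.update A j X i * U i.castSucc)).prod
          = (t.map (fun i => A i * U i.castSucc)).prod :=
        listProd_congr U t _ _ (fun i hi =>
          Function.update_of_ne (by rintro rfl; exact ht hi) _ _)
      rw [e1, Function.update_self, hA, neg_mul, neg_mul]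
    · have haj : a ≠ j := by rintro rfl; exact hnd.1 h
      rw [ih hnd.2 h, Function.update_of_ne haj, mul_neg]

private lemma seqOp_add (j : Fin n) (A : Fin n → (H →ₗ[ℂ] H)) (X Y : H →ₗ[ℂ] H)
    (hA : A j = X + Y) :
    seqOp n A U = seqOp n (Function.update A j X) U + seqOp n (Function.update A j Y) U := by
  unfold seqOp
  rw [listProd_add U _ (List.nodup_reverse.mpr (List.nodup_finRange n)) j
    (List.mem_reverse.mpr (List.mem_finRange j)) A X Y hA, mul_add]

private lemma seqOp_neg (j : Fin n) (A : Fin n → (H →ₗ[ℂ] H)) (X : H →ₗ[ℂ] H)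
    (hA : A j = -X) :
    seqOp n A U = -seqOp n (Function.update A j X) U := by
  unfold seqOp
  rw [listProd_neg U _ (List.nodup_reverse.mpr (List.nodup_finRange n)) j
    (List.mem_reverse.mpr (List.mem_finRange j)) A X hA, mul_neg]

private lemma seqOp_expand (R : Finset (Fin n)) (C X Y : Fin n → (H →ₗ[ℂ] H)) :
    seqOp n (fun j => if j ∈ R then X j + Y j else C j) U
      = ∑ T ∈ R.powerset,
          seqOp n (fun j => if j ∈ T then X j else if j ∈ R then Y j else C j) U := by
  classical
  induction R using Finset.induction_on generalizing C with
  | empty => simp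
  | @insert a R ha ih =>
    set A : Fin n → (H →ₗ[ℂ] H) := fun j => if j ∈ insert a R then X j + Y j else C j with hAdef
    have hAa : A a = X a + Y a := by simp [hAdef]
    rw [seqOp_add U a A (X a) (Y a) hAa]
    have h1 : Function.update A a (X a)
        = fun j => if j ∈ R then X j + Y j else (fun i => if i = a then X i else C i) j := by
      funext j
      by_cases hja : j = a
      · subst hja; simp [Function.update_self, ha]
      · simp [Function.update_of_ne hja, hAdef, Finset.mem_insert, hja]
    have h2 : Function.update A a (Y a)
        = fun j => if j ∈ R then X j + Y j else (fun i => if i = a then Y i else C i) j := by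
      funext j
      by_cases hja : j = a
      · subst hja; simp [Function.update_self, ha]
      · simp [Function.update_of_ne hja, hAdef, Finset.mem_insert, hja]
    rw [h1, h2, ih, ih, Finset.sum_powerset_insert ha, add_comm]
    congr 1
    · apply Finset.sum_congr rfl
      intro T hT
      have hTR : T ⊆ R := Finset.mem_powerset.mp hT
      congr 1
      funext j
      by_cases hja : j = a
      · subst hja
        have hjT : j ∉ T := fun h => ha (hTR h)
        simp [hjT, ha, Finset.mem_insert_self]
      · by_cases hjT : j ∈ T
        · simp [hjT, Finset.mem_insert, hja]
        · have : j ∉ insert a T := by simp [hja, hjT]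
          by_cases hjR : j ∈ R <;> simp [hjT, hjR, hja, this, Finset.mem_insert]
    · apply Finset.sum_congr rfl
      intro T hT
      have hTR : T ⊆ R := Finset.mem_powerset.mp hT
      congr 1
      funext j
      by_cases hja : j = a
      · subst hja
        have hjT : j ∉ T := fun h => ha (hTR h)
        simp [hjT, ha, Finset.mem_insert_self]
      · by_cases hjT : j ∈ T
        · simp [hjT]
        · by_cases hjR : j ∈ R <;> simp [hjT, hjR, hja, Finset.mem_insert]

private lemma seqOp_neg_finset (T : Finset (Fin n)) (A : Fin n → (H →ₗ[ℂ] H)) :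
    seqOp n (fun j => if j ∈ T then -(A j) else A j) U
      = ((-1 : ℂ) ^ T.card) • seqOp n A U := by
  classical
  induction T using Finset.induction_on with
  | empty => simp
  | @insert a T ha ih =>
    set B : Fin n → (H →ₗ[ℂ] H) := fun j => if j ∈ insert a T then -(A j) else A j with hBdef
    have hBa : B a = -(A a) := by simp [hBdef]
    rw [seqOp_neg U a B (A a) hBa]
    have hupd : Function.update B a (A a) = fun j => if j ∈ T then -(A j) else A j := by
      funext j
      by_cases hja : j = a
      · subst hja; simp [Function.update_self, ha]
      · simp [Function.update_of_ne hja, hBdef, Finset.mem_insert, hja]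
    rw [hupd, ih, Finset.card_insert_of_notMem ha, pow_succ, mul_smul, neg_one_smul, smul_neg]

end Aux

/-- general equivalence of the histories and weak-values definitions of
counterfactuality.  A history is a choice `s : Fin n → Bool` (`true` = oN projector `Nⱼ`,
`false` = oFf projector `1 - Nⱼ`); the condition that every history amplitude other than
the all-oFf history vanishes is equivalent to the vanishing of all sequential weak values
`(N_{i_k}, …, N_{i_1})_w` over nonempty subsets of insertion positions. -/
theorem counterfactual_histories_iff_weak_values
    {H : Type*} [NormedAddCommGroup H] [InnerProductSpace ℂ H] [FiniteDimensional ℂ H]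
    (n : ℕ) (N : Fin n → (H →ₗ[ℂ] H))
    (hN : ∀ j, IsSelfAdjoint (N j)) (hNsq : ∀ j, N j * N j = N j)
    (U : Fin (n + 1) → (H →ₗ[ℂ] H)) (hU : ∀ k, U k ∈ unitary (H →ₗ[ℂ] H))
    (ψi ψf : H)
    (hD : ⟪ψf, seqOp n (fun _ => 1) U ψi⟫_ℂ ≠ 0) :
    (∀ s : Fin n → Bool, s ≠ (fun _ => false) →
        ⟪ψf, seqOp n (fun j => if s j then N j else 1 - N j) U ψi⟫_ℂ = 0)
      ↔ (∀ S : Finset (Fin n), S.Nonempty →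
          ⟪ψf, seqOp n (fun j => if j ∈ S then N j else 1) U ψi⟫_ℂ
            / ⟪ψf, seqOp n (fun _ => 1) U ψi⟫_ℂ = 0) := by
  classical
  constructor
  · -- histories ⇒ weak values
    intro hhist S hS
    have hexp := seqOp_expand U Sᶜ N N (fun j => 1 - N j)
    have hL : (fun j => if j ∈ Sᶜ then N j + (1 - N j) else N j)
        = fun j => if j ∈ S then N j else 1 := by
      funext j
      by_cases hj : j ∈ S <;> simp [hj]
    rw [hL] at hexp
    rw [hexp, LinearMap.sum_apply, inner_sum]
    suffices hsum : ∀ T ∈ Sᶜ.powerset,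
        ⟪ψf, (seqOp n (fun j => if j ∈ T then N j else if j ∈ Sᶜ then 1 - N j else N j) U) ψi⟫_ℂ
          = 0 by
      rw [Finset.sum_eq_zero hsum, zero_div]
    intro T hT
    have hTS : T ⊆ Sᶜ := Finset.mem_powerset.mp hT
    set s : Fin n → Bool := fun j => decide (j ∈ S ∪ T) with hsdef
    have hfun : (fun j => if j ∈ T then N j else if j ∈ Sᶜ then 1 - N j else N j)
        = fun j => if s j then N j else 1 - N j := by
      funext j
      by_cases hjT : j ∈ T
      · have : j ∈ S ∪ T := Finset.mem_union_right _ hjT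
        simp [hsdef, hjT, this]
      · by_cases hjS : j ∈ S
        · have : j ∈ S ∪ T := Finset.mem_union_left _ hjS
          simp [hsdef, hjT, hjS, this]
        · have : j ∉ S ∪ T := by simp [hjS, hjT]
          simp [hsdef, hjT, hjS, this]
    rw [hfun]
    apply hhist
    intro hc
    obtain ⟨j, hj⟩ := hS
    have : s j = false := congrFun hc j
    simp [hsdef] at this
    exact this.1 hj
  · -- weak values ⇒ histories
    intro hwv s hs
    have hg : ∀ R : Finset (Fin n), R.Nonempty →
        ⟪ψf, seqOp n (fun j => if j ∈ R then N j else 1) U ψi⟫_ℂ = 0 := by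
      intro R hR
      rcases div_eq_zero_iff.mp (hwv R hR) with h | h
      · exact h
      · exact absurd h hD
    set S : Finset (Fin n) := Finset.univ.filter (fun j => s j = true) with hSdef
    have hSne : S.Nonempty := by
      by_contra hc
      apply hs
      funext j
      cases hsj : s j
      · rfl
      · exact absurd ⟨j, by simp [hSdef, hsj]⟩ hc
    have hexp := seqOp_expand U Sᶜ N (fun j => -(N j)) (fun _ => 1)
    have hL : (fun j => if j ∈ Sᶜ then -(N j) + 1 else N j)
        = fun j => if s j then N j else 1 - N j := by
      funext j
      by_cases hj : s j
      · have : j ∈ S := by simp [hSdef, hj]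
        simp [hj, this]
      · have hjS : j ∉ S := by simp [hSdef]; simpa using hj
        simp [hj, hjS, neg_add_eq_sub]
    rw [hL] at hexp
    rw [hexp, LinearMap.sum_apply, inner_sum]
    apply Finset.sum_eq_zero
    intro T hT
    have hTS : T ⊆ Sᶜ := Finset.mem_powerset.mp hT
    have hfun : (fun j => if j ∈ T then -(N j) else if j ∈ Sᶜ then (1 : H →ₗ[ℂ] H) else N j)
        = fun j => if j ∈ T then -((fun i => if i ∈ S ∪ T then N i else 1) j)
            else (fun i => if i ∈ S ∪ T then N i else 1) j := by
      funext j
      by_cases hjT : j ∈ T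
      · have : j ∈ S ∪ T := Finset.mem_union_right _ hjT
        simp [hjT, this]
      · by_cases hjS : j ∈ S
        · have h1 : j ∈ S ∪ T := Finset.mem_union_left _ hjS
          simp [hjT, hjS, h1]
        · have : j ∉ S ∪ T := by simp [hjS, hjT]
          simp [hjT, hjS, this]
    rw [hfun, seqOp_neg_finset U T (fun i => if i ∈ S ∪ T then N i else 1),
      LinearMap.smul_apply, inner_smul_right]
    have hne : (S ∪ T).Nonempty := hSne.mono Finset.subset_union_left
    rw [hg (S ∪ T) hne, mul_zero]
end

section
/- In the double interferometer with computer insertions on paths B and F, the weak values B_w and F_w vanish but the sequential weak value (F,B)_w = −1/2 is nonzero; hence the outcome D does not satisfy the histories definition of counterfactuality, since the history amplitude ⟨D|U_3 P_F U_2 P_B U_1|A⟩ ≠ 0. -/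
open scoped InnerProductSpace

/-- with computer insertions on paths B and F of the double
interferometer, the weak values B_w and F_w vanish but the sequential weak value
(F,B)_w = -1/2 is nonzero, and the history amplitude ⟨D|U₃ P_F U₂ P_B U₁|A⟩ ≠ 0,
so the outcome D fails the histories definition of counterfactuality. -/
theorem double_interferometer_not_counterfactual
    {H : Type*} [NormedAddCommGroup H] [InnerProductSpace ℂ H] [FiniteDimensional ℂ H]
    (vA vB vC vE vF vD vD' : H)
    (horth : Orthonormal ℂ ![vA, vB, vC, vE, vF, vD, vD'])
    (U1 U2 U3 : H →ₗ[ℂ] H)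
    (hU1 : U1 ∈ unitary (H →ₗ[ℂ] H)) (hU2 : U2 ∈ unitary (H →ₗ[ℂ] H))
    (hU3 : U3 ∈ unitary (H →ₗ[ℂ] H))
    (h1 : U1 vA = (Real.sqrt 2 : ℂ)⁻¹ • (vB + vC))
    (h2 : U2 vB = (Real.sqrt 2 : ℂ)⁻¹ • (vE + vF))
    (h3 : U2 vC = (Real.sqrt 2 : ℂ)⁻¹ • (vE - vF))
    (h4 : U3 vE = (Real.sqrt 2 : ℂ)⁻¹ • (-vD + vD'))
    (h5 : U3 vF = (Real.sqrt 2 : ℂ)⁻¹ • (vD + vD'))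
    (hD : ⟪vD, U3 (U2 (U1 vA))⟫_ℂ ≠ 0)
    :
    ⟪vD, U3 (U2 (proj vB (U1 vA)))⟫_ℂ / ⟪vD, U3 (U2 (U1 vA))⟫_ℂ = 0
    ∧ ⟪vD, U3 (proj vF (U2 (U1 vA)))⟫_ℂ / ⟪vD, U3 (U2 (U1 vA))⟫_ℂ = 0
    ∧ ⟪vD, U3 (proj vF (U2 (proj vB (U1 vA))))⟫_ℂ / ⟪vD, U3 (U2 (U1 vA))⟫_ℂ = -(1 / 2)
    ∧ ⟪vD, U3 (proj vF (U2 (proj vB (U1 vA))))⟫_ℂ ≠ 0 := by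
  classical
  have hON := orthonormal_iff_ite.mp horth
  have hBB : ⟪vB, vB⟫_ℂ = 1 := by simpa using hON 1 1
  have hBC : ⟪vB, vC⟫_ℂ = 0 := by simpa using hON 1 2
  have hFE : ⟪vF, vE⟫_ℂ = 0 := by simpa using hON 4 3
  have hFF : ⟪vF, vF⟫_ℂ = 1 := by simpa using hON 4 4
  have hDE' : ⟪vD, vD'⟫_ℂ = 0 := by simpa using hON 5 6
  have hDD : ⟪vD, vD⟫_ℂ = 1 := by simpa using hON 5 5
  set s : ℂ := (Real.sqrt 2 : ℂ)⁻¹ with hsdef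
  have hsq : (Real.sqrt 2 : ℂ) * (Real.sqrt 2 : ℂ) = 2 := by
    norm_cast
    exact Real.mul_self_sqrt (by norm_num)
  have hsne0 : (Real.sqrt 2 : ℂ) ≠ 0 := by
    intro h
    rw [h, mul_zero] at hsq
    norm_num at hsq
  have hss : s * s = 1 / 2 := by
    rw [hsdef, ← mul_inv]
    rw [hsq]
    norm_num
  have hsne : s ≠ 0 := inv_ne_zero hsne0
  have hproj : ∀ v x : H, proj v x = ⟪v, x⟫_ℂ • v := by
    intro v x; rfl
  -- P_B (U1 vA) = s • vB
  have hpB : proj vB (U1 vA) = s • vB := by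
    rw [hproj, h1, inner_smul_right, inner_add_right, hBB, hBC]
    simp [hsdef]
  -- U2 (P_B (U1 vA)) = (s*s) • (vE + vF)
  have hx2 : U2 (proj vB (U1 vA)) = (s * s) • (vE + vF) := by
    rw [hpB, map_smul, h2, smul_smul]
  -- P_F of that
  have hpF : proj vF (U2 (proj vB (U1 vA))) = (1 / 2 : ℂ) • vF := by
    rw [hproj, hx2, inner_smul_right, inner_add_right, hFE, hFF, hss]
    ring_nf
  -- sequential numerator
  have hnum : ⟪vD, U3 (proj vF (U2 (proj vB (U1 vA))))⟫_ℂ = (1 / 2) * s := by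
    rw [hpF, map_smul, h5, inner_smul_right, inner_smul_right, inner_add_right,
      hDD, hDE']
    ring
  -- middle state: U2 (U1 vA) = vE
  have hE : U2 (U1 vA) = vE := by
    rw [h1, map_smul, map_add, h2, h3, ← smul_add, smul_smul, hss]
    have : vE + vF + (vE - vF) = (2 : ℂ) • vE := by
      rw [two_smul]; abel
    rw [this, smul_smul]
    norm_num
  -- denominator
  have hden : ⟪vD, U3 (U2 (U1 vA))⟫_ℂ = -s := by
    rw [hE, h4, inner_smul_right, inner_add_right, inner_neg_right, hDD, hDE']
    ring
  -- B_w numerator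
  have hnumB : ⟪vD, U3 (U2 (proj vB (U1 vA)))⟫_ℂ = 0 := by
    rw [hx2, map_smul, map_add, h4, h5, inner_smul_right, inner_add_right,
      inner_smul_right, inner_smul_right, inner_add_right, inner_add_right,
      inner_neg_right, hDD, hDE']
    ring
  -- F_w numerator
  have hnumF : ⟪vD, U3 (proj vF (U2 (U1 vA)))⟫_ℂ = 0 := by
    rw [hE, hproj, hFE]
    simp
  refine ⟨by rw [hnumB, zero_div], by rw [hnumF, zero_div], ?_, ?_⟩
  · rw [hnum, hden]
    field_simp
  · rw [hnum]
    intro h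
    have := mul_eq_zero.mp h
    rcases this with h' | h'
    · norm_num at h'
    · exact hsne h'
end
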